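/- arXiv:1703.06038 — 4 statements merged into one kernel-verified Lean document; each statement's English description precedes it below -/
import Mathlib

section
/- The circulant digraphs on Z_8 with connection sets S = {1,2,5} and T = {1,5,6} are isomorphic, but there is no m ∈ Z_8* (i.e., m ∈ {1,3,5,7}) with mS = T. -/
def CirculantIso (n : ℕ) (X X' : Set (ZMod n)) : Prop :=
  ∃ e : ZMod n ≃ ZMod n, ∀ u v : ZMod n, v - u ∈ X ↔ e v - e u ∈ X'

def myf : ZMod 8 → ZMod 8 := fun i => 4 * (((i.val + 1) / 2 : ℕ) : ZMod 8) + i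

theorem stmt_2 :
    CirculantIso 8 ({1, 2, 5} : Set (ZMod 8)) ({1, 5, 6} : Set (ZMod 8)) ∧
      ∀ m : ZMod 8, IsUnit m →
        (fun x => m * x) '' ({1, 2, 5} : Set (ZMod 8)) ≠ ({1, 5, 6} : Set (ZMod 8)) := by
  constructor
  · refine ⟨Equiv.ofBijective myf (by decide), fun u v => ?_⟩
    simp only [Set.mem_insert_iff, Set.mem_singleton_iff, Equiv.ofBijective_apply]
    revert u v; decide
  · intro m hm h
    simp only [Set.image_insert_eq, Set.image_singleton] at h
    rw [Set.ext_iff] at h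
    simp only [Set.mem_insert_iff, Set.mem_singleton_iff] at h
    revert h
    revert hm
    revert m
    decide
end

section
/- The circulant digraphs on Z_9 with connection sets X = {1,3,4,7} and X' = {1,4,6,7} are isomorphic (an isomorphism is given by the permutation fixing 0,1,2 and swapping 3↔6, 4↔7, 5↔8), yet there is no m ∈ Z_9* with mX = X'. -/
private def f9 : ZMod 9 → ZMod 9 := fun x =>
  if x.val ≤ 2 then x else if x.val ≤ 5 then x + 3 else x - 3

private lemma f9_invol : Function.Involutive f9 := by
  intro x; revert x; decide

theorem stmt_3 :
    (∃ e : Equiv.Perm (ZMod 9),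
      (e 0 = 0 ∧ e 1 = 1 ∧ e 2 = 2 ∧ e 3 = 6 ∧ e 6 = 3 ∧ e 4 = 7 ∧ e 7 = 4 ∧
        e 5 = 8 ∧ e 8 = 5) ∧
      ∀ u v : ZMod 9,
        v - u ∈ ({1, 3, 4, 7} : Set (ZMod 9)) ↔ e v - e u ∈ ({1, 4, 6, 7} : Set (ZMod 9))) ∧
    ∀ m : ZMod 9, IsUnit m →
      (fun x => m * x) '' ({1, 3, 4, 7} : Set (ZMod 9)) ≠ ({1, 4, 6, 7} : Set (ZMod 9)) := by
  constructor
  · refine ⟨f9_invol.toPerm, ?_, ?_⟩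
    · refine ⟨?_, ?_, ?_, ?_, ?_, ?_, ?_, ?_, ?_⟩ <;> decide
    · intro u v
      show v - u ∈ ({1, 3, 4, 7} : Set (ZMod 9)) ↔
        f9 v - f9 u ∈ ({1, 4, 6, 7} : Set (ZMod 9))
      simp only [Set.mem_insert_iff, Set.mem_singleton_iff]
      revert u v; decide
  · intro m hm
    have hu : m = 1 ∨ m = 2 ∨ m = 4 ∨ m = 5 ∨ m = 7 ∨ m = 8 := by
      rcases hm with ⟨u, rfl⟩
      revert u; decide
    intro hEq
    rw [show ({1, 3, 4, 7} : Set (ZMod 9)) = ↑({1, 3, 4, 7} : Finset (ZMod 9)) by simp,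
        show ({1, 4, 6, 7} : Set (ZMod 9)) = ↑({1, 4, 6, 7} : Finset (ZMod 9)) by simp,
        ← Finset.coe_image, Finset.coe_inj] at hEq
    rcases hu with rfl | rfl | rfl | rfl | rfl | rfl <;> revert hEq <;> decide
end

section
/- The circulant digraphs on Z_9 with connection sets X = {1,3} and X' = {1,6} are not isomorphic. -/
theorem stmt_4 : ¬ CirculantIso 9 ({1, 3} : Set (ZMod 9)) ({1, 6} : Set (ZMod 9)) := by
  rintro ⟨e, he⟩
  have key : ∀ a b : ZMod 9, b - a ∈ ({1, 6} : Set (ZMod 9)) →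
      e.symm b - e.symm a ∈ ({1, 3} : Set (ZMod 9)) := by
    intro a b h
    exact (he (e.symm a) (e.symm b)).2 (by simpa using h)
  have h1 := key 0 1 (by norm_num)
  have h2 := key 1 2 (by norm_num)
  have h3 := key 2 3 (by norm_num)
  have h4 := key 3 0 (by decide)
  have hsum : (e.symm 1 - e.symm 0) + (e.symm 2 - e.symm 1) +
      (e.symm 3 - e.symm 2) + (e.symm 0 - e.symm 3) = 0 := by ring
  simp only [Set.mem_insert_iff, Set.mem_singleton_iff] at h1 h2 h3 h4
  rcases h1 with h1 | h1 <;> rcases h2 with h2 | h2 <;>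
    rcases h3 with h3 | h3 <;> rcases h4 with h4 | h4 <;>
    rw [h1, h2, h3, h4] at hsum <;> revert hsum <;> decide
end

section
/- For a prime p, two circulant digraphs Cay(Z_p, X) and Cay(Z_p, X') are isomorphic if and only if X' = mX for some m ∈ Z_p*. -/
open Equiv

theorem Nat.Prime.sq_not_dvd_factorial {p : ℕ} (hp : p.Prime) : ¬ p ^ 2 ∣ p.factorial := by
  rw [← Nat.mul_factorial_pred hp.ne_zero, sq, Nat.mul_dvd_mul_iff_left hp.pos,
    hp.dvd_factorial]
  have := hp.pos
  omega

theorem exists_conj_eq_zpow_of_orderOf_eq_prime {G : Type*} [Group G] [Finite G] {p : ℕ}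
    [hp : Fact p.Prime] (hG : ¬ p ^ 2 ∣ Nat.card G) {a b : G} (ha : orderOf a = p)
    (hb : orderOf b = p) : ∃ g : G, ∃ j : ℤ, g * a * g⁻¹ = b ^ j := by
  have hG0 : Nat.card G ≠ 0 := Nat.card_pos.ne'
  have hfac : (Nat.card G).factorization p = 1 := by
    have h1 : p ^ 1 ∣ Nat.card G := by simpa [ha] using orderOf_dvd_natCard a
    rw [hp.out.pow_dvd_iff_le_factorization hG0] at h1 hG
    omega
  let P : Sylow p G := .ofCard (.zpowers a) (by rw [Nat.card_zpowers, ha, hfac, pow_one])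
  let Q : Sylow p G := .ofCard (.zpowers b) (by rw [Nat.card_zpowers, hb, hfac, pow_one])
  obtain ⟨g, hg⟩ := MulAction.exists_smul_eq G P Q
  have hconj : MulAut.conj g • a ∈ (Q : Subgroup G) := by
    rw [← hg, Sylow.coe_subgroup_smul]
    exact Subgroup.smul_mem_pointwise_smul _ _ _ (Subgroup.mem_zpowers a)
  obtain ⟨j, hj⟩ := Subgroup.mem_zpowers_iff.mp hconj
  exact ⟨g, j, hj.symm⟩

theorem ZMod.eq_add_mul_of_map_add_one {n : ℕ} [NeZero n] {f : ZMod n → ZMod n} {c : ZMod n}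
    (hf : ∀ x, f (x + 1) = f x + c) (x : ZMod n) : f x = f 0 + x * c := by
  rw [← ZMod.natCast_zmod_val x]
  induction x.val with
  | zero => simp
  | succ k ih => rw [Nat.cast_succ, hf, ih]; ring

variable {n : ℕ}

def IsCirculantIso (X X' : Set (ZMod n)) (e : Perm (ZMod n)) : Prop :=
  ∀ u v : ZMod n, v - u ∈ X ↔ e v - e u ∈ X'

namespace IsCirculantIso

variable {X Y Z : Set (ZMod n)} {e f : Perm (ZMod n)}

theorem one (X : Set (ZMod n)) : IsCirculantIso X X 1 := fun _ _ => Iff.rfl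

theorem mul (he : IsCirculantIso Y Z e) (hf : IsCirculantIso X Y f) :
    IsCirculantIso X Z (e * f) :=
  fun u v => (hf u v).trans (he (f u) (f v))

theorem inv (he : IsCirculantIso X Y e) : IsCirculantIso Y X e⁻¹ := fun u v => by
  simpa using (he (e⁻¹ u) (e⁻¹ v)).symm

theorem addRight (X : Set (ZMod n)) (a : ZMod n) : IsCirculantIso X X (Equiv.addRight a) :=
  fun u v => by simp

theorem unitsMulLeft (m : (ZMod n)ˣ) (X : Set (ZMod n)) :
    IsCirculantIso X ((fun x => (m : ZMod n) * x) '' X) (Units.mulLeft m) := fun u v => by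
  show _ ↔ m * v - m * u ∈ _
  rw [← mul_sub, m.isUnit.mul_right_injective.mem_set_image]

theorem exists_units_image_eq [NeZero n] {c : ZMod n} (hf : IsCirculantIso X Y f)
    (hfc : ∀ x, f (x + 1) = f x + c) :
    ∃ m : (ZMod n)ˣ, (fun x => (m : ZMod n) * x) '' X = Y := by
  have haff := ZMod.eq_add_mul_of_map_add_one hfc
  have hmem : ∀ x, x ∈ X ↔ c * x ∈ Y := fun x => by
    simpa [haff x, mul_comm] using hf 0 x
  obtain ⟨y, hy⟩ := f.surjective (f 0 + 1)
  have hcy : c * y = 1 := by rw [mul_comm]; simpa [haff y] using hy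
  refine ⟨Units.mkOfMulEqOne c y hcy, Set.ext fun z => ⟨?_, fun hz => ?_⟩⟩
  · rintro ⟨x, hx, rfl⟩
    exact (hmem x).mp hx
  · exact ⟨y * z, (hmem _).mpr (by simpa [← mul_assoc, hcy]), by simp [← mul_assoc, hcy]⟩

end IsCirculantIso

def circulantAut (X : Set (ZMod n)) : Subgroup (Perm (ZMod n)) where
  carrier := {e | IsCirculantIso X X e}
  one_mem' := IsCirculantIso.one X
  mul_mem' := IsCirculantIso.mul
  inv_mem' := IsCirculantIso.inv

theorem orderOf_addRight_one (p : ℕ) [Fact p.Prime] :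
    orderOf (Equiv.addRight (1 : ZMod p)) = p := by
  refine orderOf_eq_prime ?_ fun h => absurd (congrArg (· (0 : ZMod p)) h) (by simp)
  rw [Equiv.nsmul_addRight, nsmul_eq_mul, mul_one, ZMod.natCast_self, Equiv.addRight_zero]

theorem IsCirculantIso.exists_map_add_one {p : ℕ} [hp : Fact p.Prime] {X X' : Set (ZMod p)}
    {e : Perm (ZMod p)} (he : IsCirculantIso X X' e) :
    ∃ f : Perm (ZMod p), ∃ c : ZMod p, IsCirculantIso X X' f ∧ ∀ x, f (x + 1) = f x + c := by
  set σ := Equiv.addRight (1 : ZMod p) with hσ_def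
  have hσ : σ ∈ circulantAut X := IsCirculantIso.addRight X 1
  have hτ : e⁻¹ * σ * e ∈ circulantAut X := (he.inv.mul (.addRight X' 1)).mul he
  have hτσ : orderOf (e⁻¹ * σ * e) = orderOf σ :=
    SemiconjBy.orderOf_eq e (by simp [SemiconjBy, mul_assoc])
  have hA : ¬ p ^ 2 ∣ Nat.card (circulantAut X) := fun h => hp.out.sq_not_dvd_factorial <| by
    simpa [Nat.card_perm, Fintype.card_perm] using h.trans (Subgroup.card_subgroup_dvd_card _)
  obtain ⟨⟨g, hg⟩, j, hgj⟩ := exists_conj_eq_zpow_of_orderOf_eq_prime hA (a := ⟨σ, hσ⟩)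
    (b := ⟨_, hτ⟩) (by rw [Subgroup.orderOf_mk, orderOf_addRight_one])
    (by rw [Subgroup.orderOf_mk, hτσ, orderOf_addRight_one])
  have hcomm : e * g * σ = σ ^ j * (e * g) := by
    have hgj' : g * σ * g⁻¹ = e⁻¹ * σ ^ j * e := by
      have : g * σ * g⁻¹ = (e⁻¹ * σ * e⁻¹⁻¹) ^ j := by
        simpa using congrArg Subtype.val hgj
      rwa [conj_zpow, inv_inv] at this
    calc e * g * σ = e * (g * σ * g⁻¹) * g := by group
      _ = σ ^ j * (e * g) := by rw [hgj']; group
  refine ⟨e * g, j, he.mul hg, fun x => ?_⟩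
  simpa [hσ_def, Equiv.zsmul_addRight] using congrArg (· x) hcomm

theorem stmt_5_general (p : ℕ) (hp : p.Prime) (X X' : Set (ZMod p)) :
    CirculantIso p X X' ↔ ∃ m : (ZMod p)ˣ, (fun x => (m : ZMod p) * x) '' X = X' := by
  have : Fact p.Prime := ⟨hp⟩
  constructor
  · rintro ⟨e, he⟩
    obtain ⟨f, c, hf, hfc⟩ := IsCirculantIso.exists_map_add_one he
    exact hf.exists_units_image_eq hfc
  · rintro ⟨m, rfl⟩
    exact ⟨_, IsCirculantIso.unitsMulLeft m X⟩

/-- Turner's theorem: Ádám's conjecture holds for circulant digraphs of prime order. -/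
theorem stmt_5 (p : ℕ) (hp : p.Prime) (X X' : Set (ZMod p))
    (hX : (0 : ZMod p) ∉ X) (hX' : (0 : ZMod p) ∉ X') :
    CirculantIso p X X' ↔ ∃ m : (ZMod p)ˣ, (fun x => (m : ZMod p) * x) '' X = X' :=
  stmt_5_general p hp X X'
end
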